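/- Let X and Y be real Hilbert spaces, A, V : X → Y bounded linear operators, G : X → ℝ a γ_G-strongly convex function and F* : Y → ℝ a γ_{F*}-strongly convex function. Let γ > 0 and let constants satisfy 0 < μ̃_G < μ_G < γ_G, 0 < μ̃_{F*} < μ_{F*} < γ_{F*}, μ̃_G·μ̃_{F*} ≥ (1/4)·‖A − V‖², and α ≥ max{γ·μ_G·μ̃_G/(μ_G − μ̃_G), γ·μ_{F*}·μ̃_{F*}/(μ_{F*} − μ̃_{F*})}. Then for all x, x', r₁, r₁', s₁, s₁' ∈ X, all y, y', r₂, r₂', s₂, s₂' ∈ Y, all subgradients g of G at x and g' of G at x', and all subgradients f of F* at y and f' of F* at y', writing dx = x − x', dy = y − y', dr₁ = r₁ − r₁', dr₂ = r₂ − r₂', ds₁ = s₁ − s₁', ds₂ = s₂ − s₂', one has ⟪α·dx + γ·(g − g') − dr₁ − ds₁, dx⟫ + ⟪α·dy + γ·(f − f') − dr₂ − ds₂, dy⟫ + ⟪dx − ds₁, dr₁⟫ + ⟪dy − ds₂, dr₂⟫ + ⟪(1 − 2α)·dx + dr₁ + α·ds₁ + γ·V*(ds₂), ds₁⟫ + ⟪(1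 − 2α)·dy + dr₂ + α·ds₂ − γ·A(ds₁), ds₂⟫ ≥ 0. -/
import Mathlib


open scoped RealInnerProductSpace

/-- `g` is a subgradient of `f` at `x`. -/
def IsSubgradientAt {E : Type*} [NormedAddCommGroup E] [InnerProductSpace ℝ E]
    (f : E → ℝ) (g x : E) : Prop :=
  ∀ z, f x + ⟪g, z - x⟫ ≤ f z

/-- `f` is `γ`-strongly convex: `x ↦ f x − (γ/2)‖x‖²` is convex. -/
def IsStronglyConvex {E : Type*} [NormedAddCommGroup E] [InnerProductSpace ℝ E]
    (γ : ℝ) (f : E → ℝ) : Prop :=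
  0 < γ ∧ ConvexOn ℝ Set.univ (fun x => f x - γ / 2 * ‖x‖ ^ 2)

/-- Norm of a convex combination. -/
lemma comb_norm_sq {E : Type*} [NormedAddCommGroup E] [InnerProductSpace ℝ E] (x y : E) (t : ℝ) :
    ‖(1-t) • x + t • y‖^2 = (1-t)*‖x‖^2 + t*‖y‖^2 - t*(1-t)*‖x-y‖^2 := by
  rw [← real_inner_self_eq_norm_sq, ← real_inner_self_eq_norm_sq, ← real_inner_self_eq_norm_sq,
    ← real_inner_self_eq_norm_sq]
  simp only [inner_add_left, inner_add_right, inner_sub_left, inner_sub_right,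
    real_inner_smul_left, real_inner_smul_right]
  rw [real_inner_comm y x]
  ring

lemma subgrad_half {E : Type*} [NormedAddCommGroup E] [InnerProductSpace ℝ E]
    {γc : ℝ} {f : E → ℝ} (hf : IsStronglyConvex γc f) {g x x' : E}
    (hg : IsSubgradientAt f g x) {t : ℝ} (ht0 : 0 < t) (ht1 : t < 1) :
    ⟪g, x' - x⟫ ≤ f x' - f x - γc/2 * (1-t) * ‖x - x'‖^2 := by
  have hc := hf.2.2 (Set.mem_univ x) (Set.mem_univ x') (by linarith : (0:ℝ) ≤ 1 - t)
    (le_of_lt ht0) (by ring)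
  simp only [smul_eq_mul] at hc
  have hsub := hg ((1-t) • x + t • x')
  have hexp : ((1-t) • x + t • x') - x = t • (x' - x) := by
    rw [sub_smul, smul_sub, one_smul]; abel
  rw [hexp, real_inner_smul_right] at hsub
  have hn := comb_norm_sq x x' t
  rw [hn] at hc
  nlinarith [hsub, hc]

/-- Strong monotonicity of the subdifferential of a strongly convex function. -/
lemma strong_mono {E : Type*} [NormedAddCommGroup E] [InnerProductSpace ℝ E]
    {γc : ℝ} {f : E → ℝ} (hf : IsStronglyConvex γc f) {g g' x x' : E}
    (hg : IsSubgradientAt f g x) (hg' : IsSubgradientAt f g' x') :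
    γc * ‖x - x'‖^2 ≤ ⟪g - g', x - x'⟫ := by
  have key : ∀ t : ℝ, 0 < t → t < 1 → γc * (1-t) * ‖x - x'‖^2 ≤ ⟪g - g', x - x'⟫ := by
    intro t ht0 ht1
    have h1 := subgrad_half hf hg ht0 ht1 (x' := x')
    have h2 := subgrad_half hf hg' ht0 ht1 (x' := x)
    have hns : ‖x' - x‖ = ‖x - x'‖ := norm_sub_rev _ _
    rw [hns] at h2
    have hi : ⟪g - g', x - x'⟫ = -⟪g, x' - x⟫ - ⟪g', x - x'⟫ := by
      rw [inner_sub_left, ← inner_neg_right]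
      simp [neg_sub]
    rw [hi]
    nlinarith
  refine le_of_forall_pos_le_add ?_
  intro ε hε
  set C := γc * ‖x - x'‖^2 with hC
  rcases le_or_gt C 0 with h | h
  · have h0 := key (1/2) (by norm_num) (by norm_num)
    nlinarith [sq_nonneg ‖x - x'‖, hf.1]
  · set t := min (1/2) (ε / C) with htdef
    have ht0 : 0 < t := lt_min (by norm_num) (div_pos hε h)
    have ht1 : t < 1 := lt_of_le_of_lt (min_le_left _ _) (by norm_num)
    have h1 := key t ht0 ht1
    have htC : t * C ≤ ε := by
      calc t * C ≤ (ε / C) * C := by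
            apply mul_le_mul_of_nonneg_right (min_le_right _ _) (le_of_lt h)
        _ = ε := div_mul_cancel₀ _ (ne_of_gt h)
    nlinarith

/-- Scalar step combining the triangle inequality with the choice of `α`. -/
lemma alpha_step (γ α μ μt s a u : ℝ) (hγ : 0 < γ) (hμt : 0 < μt) (hμ : μt < μ)
    (hα : γ * μ * μt / (μ - μt) ≤ α) (hs : 0 ≤ s) (ha : 0 ≤ a) (hu : 0 ≤ u)
    (huc : u ≤ s + a) :
    γ * μt * u^2 ≤ α * s^2 + γ * μ * a^2 := by
  have hδ : 0 < μ - μt := by linarith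
  have hαδ : γ * μ * μt ≤ α * (μ - μt) := by
    rwa [div_le_iff₀ hδ] at hα
  have hu2 : u^2 ≤ (s + a)^2 := by nlinarith
  nlinarith [sq_nonneg (μt * s - (μ - μt) * a), mul_le_mul_of_nonneg_right hαδ (sq_nonneg s),
    mul_le_mul_of_nonneg_left hu2 (by positivity : (0:ℝ) ≤ γ * μt * (μ - μt)),
    mul_nonneg (mul_nonneg hγ.le hμt.le) (sq_nonneg (s+a))]

/-- Scalar AM–GM step for the mismatch term. -/
lemma mismatch_step (c u w m m' : ℝ) (hc : 0 ≤ c) (hm : 0 < m) (hm' : 0 < m')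
    (hu : 0 ≤ u) (hw : 0 ≤ w) (h4 : (1/4) * c^2 ≤ m * m') :
    c * u * w ≤ m * u^2 + m' * w^2 := by
  nlinarith [sq_nonneg (m * u^2 - m' * w^2),
    mul_le_mul_of_nonneg_right h4 (sq_nonneg (u*w)),
    (by positivity : (0:ℝ) ≤ m*u^2 + m'*w^2),
    mul_nonneg (mul_nonneg hc hu) hw]

/-- Monotonicity of the lifted operator `𝔸_α` on `(X × Y)³` for the primal-dual
Douglas–Rachford method with mismatched adjoint, under the parameter conditions
`0 < μ̃_G < μ_G < γ_G`, `0 < μ̃_{F*} < μ_{F*} < γ_{F*}`, `μ̃_G μ̃_{F*} ≥ ‖A − V‖²/4` and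
`α ≥ max{γμ_Gμ̃_G/(μ_G − μ̃_G), γμ_{F*}μ̃_{F*}/(μ_{F*} − μ̃_{F*})}`. -/
theorem lifted_operator_monotone
    {X Y : Type*} [NormedAddCommGroup X] [InnerProductSpace ℝ X] [CompleteSpace X]
    [NormedAddCommGroup Y] [InnerProductSpace ℝ Y] [CompleteSpace Y]
    (A V : X →L[ℝ] Y) (G : X → ℝ) (Fs : Y → ℝ) (γG γFs : ℝ)
    (hG : IsStronglyConvex γG G) (hFs : IsStronglyConvex γFs Fs)
    (γ : ℝ) (hγ : 0 < γ)
    (μG μFs μtG μtFs : ℝ)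
    (hμtG : 0 < μtG) (hμG : μtG < μG) (hμGγ : μG < γG)
    (hμtFs : 0 < μtFs) (hμFs : μtFs < μFs) (hμFsγ : μFs < γFs)
    (hmm : (1 / 4) * ‖A - V‖ ^ 2 ≤ μtG * μtFs)
    (α : ℝ)
    (hα : max (γ * μG * μtG / (μG - μtG)) (γ * μFs * μtFs / (μFs - μtFs)) ≤ α)
    (x x' r₁ r₁' s₁ s₁' g g' : X) (y y' r₂ r₂' s₂ s₂' f f' : Y)
    (hg : IsSubgradientAt G g x) (hg' : IsSubgradientAt G g' x')
    (hf : IsSubgradientAt Fs f y) (hf' : IsSubgradientAt Fs f' y')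
    (dx : X) (hdx : dx = x - x') (dy : Y) (hdy : dy = y - y')
    (dr₁ : X) (hdr₁ : dr₁ = r₁ - r₁') (dr₂ : Y) (hdr₂ : dr₂ = r₂ - r₂')
    (ds₁ : X) (hds₁ : ds₁ = s₁ - s₁') (ds₂ : Y) (hds₂ : ds₂ = s₂ - s₂') :
    0 ≤ ⟪α • dx + γ • (g - g') - dr₁ - ds₁, dx⟫ +
        ⟪α • dy + γ • (f - f') - dr₂ - ds₂, dy⟫ +
        ⟪dx - ds₁, dr₁⟫ + ⟪dy - ds₂, dr₂⟫ +
        ⟪(1 - 2 * α) • dx + dr₁ + α • ds₁ + γ • (ContinuousLinearMap.adjoint V) ds₂, ds₁⟫ +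
        ⟪(1 - 2 * α) • dy + dr₂ + α • ds₂ - γ • A ds₁, ds₂⟫ := by
  -- Expand the quadratic form
  have expand :
      ⟪α • dx + γ • (g - g') - dr₁ - ds₁, dx⟫ +
        ⟪α • dy + γ • (f - f') - dr₂ - ds₂, dy⟫ +
        ⟪dx - ds₁, dr₁⟫ + ⟪dy - ds₂, dr₂⟫ +
        ⟪(1 - 2 * α) • dx + dr₁ + α • ds₁ + γ • (ContinuousLinearMap.adjoint V) ds₂, ds₁⟫ +
        ⟪(1 - 2 * α) • dy + dr₂ + α • ds₂ - γ • A ds₁, ds₂⟫ =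
      α * ‖dx - ds₁‖^2 + α * ‖dy - ds₂‖^2 + γ * ⟪g - g', dx⟫ + γ * ⟪f - f', dy⟫
        - γ * ⟪(A - V) ds₁, ds₂⟫ := by
    rw [← real_inner_self_eq_norm_sq, ← real_inner_self_eq_norm_sq]
    simp only [ContinuousLinearMap.sub_apply, inner_add_left, inner_add_right, inner_sub_left,
      inner_sub_right, real_inner_smul_left, real_inner_smul_right,
      ContinuousLinearMap.adjoint_inner_left]
    rw [real_inner_comm dr₁ dx, real_inner_comm ds₁ dx, real_inner_comm dr₂ dy,
      real_inner_comm ds₂ dy, real_inner_comm ds₂ (V ds₁), real_inner_comm dr₁ ds₁,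
      real_inner_comm dr₂ ds₂]
    ring
  rw [expand]
  -- Strong monotonicity of the subdifferentials
  have hIG : γG * ‖dx‖^2 ≤ ⟪g - g', dx⟫ := by
    rw [hdx]; exact strong_mono hG hg hg'
  have hIF : γFs * ‖dy‖^2 ≤ ⟪f - f', dy⟫ := by
    rw [hdy]; exact strong_mono hFs hf hf'
  -- Bound the mismatch term
  have hP : ⟪(A - V) ds₁, ds₂⟫ ≤ ‖A - V‖ * ‖ds₁‖ * ‖ds₂‖ := by
    calc ⟪(A - V) ds₁, ds₂⟫ ≤ ‖(A - V) ds₁‖ * ‖ds₂‖ := real_inner_le_norm _ _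
      _ ≤ (‖A - V‖ * ‖ds₁‖) * ‖ds₂‖ :=
          mul_le_mul_of_nonneg_right ((A - V).le_opNorm ds₁) (norm_nonneg _)
      _ = ‖A - V‖ * ‖ds₁‖ * ‖ds₂‖ := by ring
  have hP2 : ‖A - V‖ * ‖ds₁‖ * ‖ds₂‖ ≤ μtG * ‖ds₁‖^2 + μtFs * ‖ds₂‖^2 :=
    mismatch_step _ _ _ _ _ (norm_nonneg _) hμtG hμtFs (norm_nonneg _) (norm_nonneg _) hmm
  -- Triangle inequalities
  have htr1 : ‖ds₁‖ ≤ ‖dx - ds₁‖ + ‖dx‖ := by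
    have h := norm_sub_le dx (dx - ds₁)
    rw [sub_sub_cancel] at h
    linarith
  have htr2 : ‖ds₂‖ ≤ ‖dy - ds₂‖ + ‖dy‖ := by
    have h := norm_sub_le dy (dy - ds₂)
    rw [sub_sub_cancel] at h
    linarith
  -- α-steps
  have t1 : γ * μtG * ‖ds₁‖^2 ≤ α * ‖dx - ds₁‖^2 + γ * μG * ‖dx‖^2 :=
    alpha_step γ α μG μtG _ _ _ hγ hμtG hμG (le_trans (le_max_left _ _) hα)
      (norm_nonneg _) (norm_nonneg _) (norm_nonneg _) htr1
  have t2 : γ * μtFs * ‖ds₂‖^2 ≤ α * ‖dy - ds₂‖^2 + γ * μFs * ‖dy‖^2 :=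
    alpha_step γ α μFs μtFs _ _ _ hγ hμtFs hμFs (le_trans (le_max_right _ _) hα)
      (norm_nonneg _) (norm_nonneg _) (norm_nonneg _) htr2
  -- Multiply the key inequalities by γ ≥ 0 and conclude
  have t3 : γ * ⟪(A - V) ds₁, ds₂⟫ ≤ γ * (μtG * ‖ds₁‖^2 + μtFs * ‖ds₂‖^2) :=
    mul_le_mul_of_nonneg_left (le_trans hP hP2) hγ.le
  have t4 : γ * (γG * ‖dx‖^2) ≤ γ * ⟪g - g', dx⟫ := mul_le_mul_of_nonneg_left hIG hγ.le
  have t5 : γ * (γFs * ‖dy‖^2) ≤ γ * ⟪f - f', dy⟫ := mul_le_mul_of_nonneg_left hIF hγ.le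
  have t6 : 0 ≤ γ * (γG - μG) * ‖dx‖^2 :=
    mul_nonneg (mul_nonneg hγ.le (by linarith)) (sq_nonneg _)
  have t7 : 0 ≤ γ * (γFs - μFs) * ‖dy‖^2 :=
    mul_nonneg (mul_nonneg hγ.le (by linarith)) (sq_nonneg _)
  nlinarith [t1, t2, t3, t4, t5, t6, t7]
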